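/- arXiv:math/0207127 — 6 statements merged into one kernel-verified Lean document; each statement's English description precedes it below -/
import Mathlib

section
/- Let k be a field and V a k-vector space, and endow L(V) = End_k(V) with the finite topology. Then every smooth simple module over the ring L(V) is isomorphic, as an L(V)-module, to V itself (where V is an L(V)-module via evaluation φ·v = φ(v)). -/
/-- The finite topology on `End_k(V)`: the subspace topology induced by the inclusion
`End_k(V) ⊆ (V → V)`, where `V` carries the discrete topology and `V → V` the
product topology. -/
def finiteTopology (k V : Type*) [Field k] [AddCommGroup V] [Module k V] :
    TopologicalSpace (Module.End k V) :=
  TopologicalSpace.induced (fun φ => (φ : V → V))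
    (@Pi.topologicalSpace V (fun _ => V) (fun _ => ⊥))

/-! Smoothness of a nonzero `w : W` gives a finite set `I ⊆ V` such that every operator vanishing
on `I` kills `w`. A finite sum `π` of rank-one operators `f ⊗ v : x ↦ f x • v` is the identity on
`I`, so `π • w = w ≠ 0` and some `(f ⊗ v) • w ≠ 0`. As `ψ ∘ (f ⊗ v) = f ⊗ ψ v`, the map
`v ↦ (f ⊗ v) • w` is a nonzero `L(V)`-linear map between the simple modules `V` and `W`, hence an
isomorphism by Schur's lemma. -/

open LinearMap Topology

theorem LinearMap.comp_smulRight {R M M₁ M₂ : Type*} [CommSemiring R] [AddCommMonoid M]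
    [AddCommMonoid M₁] [AddCommMonoid M₂] [Module R M] [Module R M₁] [Module R M₂]
    (g : M →ₗ[R] M₂) (f : M₁ →ₗ[R] R) (v : M) : g ∘ₗ f.smulRight v = f.smulRight (g v) := by
  ext; simp

theorem Module.Basis.sum_coord_smul_of_support_subset {ι R M : Type*} [CommSemiring R]
    [AddCommMonoid M] [Module R M] (b : Module.Basis ι R M) {s : Finset ι} {x : M}
    (h : (b.repr x).support ⊆ s) : ∑ i ∈ s, b.coord i x • b i = x := by
  conv_rhs => rw [← b.linearCombination_repr x]
  rw [Finsupp.linearCombination_apply_of_mem_supported R h]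
  rfl

theorem Module.Basis.exists_finset_sum_smulRight_coord_apply_eq {ι R M : Type*} [CommSemiring R]
    [AddCommMonoid M] [Module R M] (b : Module.Basis ι R M) (I : Finset M) :
    ∃ s : Finset ι, ∀ x ∈ I, (∑ i ∈ s, (b.coord i).smulRight (b i)) x = x := by
  classical
  refine ⟨I.biUnion fun x => (b.repr x).support, fun x hx => ?_⟩
  rw [LinearMap.sum_apply]
  exact b.sum_coord_smul_of_support_subset <|
    Finset.subset_biUnion_of_mem (fun x => (b.repr x).support) hx

theorem exists_finset_of_isOpen_finiteTopology {k V : Type*} [Field k] [AddCommGroup V]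
    [Module k V] {s : Set (Module.End k V)} (hs : IsOpen[finiteTopology k V] s)
    {φ : Module.End k V} (hφ : φ ∈ s) :
    ∃ I : Finset V, ∀ ψ : Module.End k V, (∀ x ∈ I, ψ x = φ x) → ψ ∈ s := by
  let _ : TopologicalSpace V := ⊥
  obtain ⟨t, ht, rfl⟩ := isOpen_induced_iff.mp hs
  obtain ⟨I, u, hu, hsub⟩ := isOpen_pi_iff.mp ht _ hφ
  refine ⟨I, fun ψ hψ => hsub fun x hx => ?_⟩
  simpa [hψ x hx] using (hu x hx).2

section SmoothModule

variable {k V W : Type*} [Field k] [AddCommGroup V] [Module k V] [AddCommGroup W]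
  [Module (Module.End k V) W]

def rankOneSMul (f : V →ₗ[k] k) (w : W) : V →ₗ[Module.End k V] W where
  toFun v := f.smulRight v • w
  map_add' x y := by rw [← add_smul, ← smulRightₗ_apply, map_add]; rfl
  map_smul' ψ v := by
    rw [RingHom.id_apply, Module.End.smul_def, ← comp_smulRight, ← Module.End.mul_eq_comp,
      mul_smul]

theorem nonempty_linearEquiv_of_smulRight_smul_ne_zero
    [IsSimpleModule (Module.End k V) W] {f : V →ₗ[k] k} {v : V} {w : W}
    (h : f.smulRight v • w ≠ 0) : Nonempty (W ≃ₗ[Module.End k V] V) := by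
  have : Nontrivial V := ⟨v, 0, by rintro rfl; simp at h⟩
  have hne : rankOneSMul f w ≠ 0 := fun h0 => h (LinearMap.congr_fun h0 v)
  exact ⟨(LinearEquiv.ofBijective _ (bijective_of_ne_zero hne)).symm⟩

theorem exists_smulRight_smul_ne_zero {w : W} (hw : w ≠ 0)
    (hopen : IsOpen[finiteTopology k V] {φ : Module.End k V | φ • w = 0}) :
    ∃ (f : V →ₗ[k] k) (v : V), f.smulRight v • w ≠ 0 := by
  obtain ⟨I, hI⟩ := exists_finset_of_isOpen_finiteTopology hopen (φ := 0) (zero_smul _ w)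
  let b := Module.Basis.ofVectorSpace k V
  obtain ⟨s, hs⟩ := b.exists_finset_sum_smulRight_coord_apply_eq I
  have hπ : (∑ i ∈ s, (b.coord i).smulRight (b i)) • w = w := by
    have := hI (1 - ∑ i ∈ s, (b.coord i).smulRight (b i)) fun x hx => by simp [hs x hx]
    rwa [Set.mem_ofPred_eq, sub_smul, one_smul, sub_eq_zero, eq_comm] at this
  by_contra! h
  rw [← hπ, Finset.sum_smul, Finset.sum_eq_zero fun i _ => h _ _] at hw
  exact hw rfl

end SmoothModule

/-- Every smooth simple module over the ring `L(V) = End_k(V)` (with the finite topology)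
is isomorphic to `V` itself, where `V` is an `L(V)`-module via evaluation. -/
theorem smooth_simple_module_of_endomorphism_ring
    (k V : Type*) [Field k] [AddCommGroup V] [Module k V]
    (W : Type*) [AddCommGroup W] [Module (Module.End k V) W]
    (hsmooth : ∀ w : W,
      @IsOpen (Module.End k V) (finiteTopology k V) {φ : Module.End k V | φ • w = 0})
    (hsimple : IsSimpleModule (Module.End k V) W) :
    Nonempty (W ≃ₗ[Module.End k V] V) := by
  have := IsSimpleModule.nontrivial (Module.End k V) W
  obtain ⟨w, hw⟩ := exists_ne (0 : W)
  obtain ⟨f, v, h⟩ := exists_smulRight_smul_ne_zero hw (hsmooth w)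
  exact nonempty_linearEquiv_of_smulRight_smul_ne_zero h
end

section
/- Let k be a field and V, W be k-vector spaces, and endow both L(V) = End_k(V) and L(W) = End_k(W) with the finite topology. Then every continuous (not necessarily unital) ring homomorphism ρ : L(V) → L(W) is either injective or identically zero; equivalently, if the kernel of ρ is nonzero then ρ = 0. -/
open Topology

attribute [local instance] finiteTopology

namespace Module.End

variable {k V : Type*} [Field k] [AddCommGroup V] [Module k V]

theorem nhds_basis_eqOn (ψ : Module.End k V) :
    (𝓝 ψ).HasBasis Set.Finite (fun I => {χ | Set.EqOn χ ψ I}) := by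
  let _ : TopologicalSpace V := ⊥
  have : DiscreteTopology V := ⟨rfl⟩
  rw [show 𝓝 ψ = _ from nhds_induced _ _, nhds_pi, nhds_discrete]
  exact (Filter.hasBasis_pi_pure _).comap _

instance t2Space_finiteTopology : T2Space (Module.End k V) := by
  let _ : TopologicalSpace V := ⊥
  have : DiscreteTopology V := ⟨rfl⟩
  exact .of_injective_continuous DFunLike.coe_injective continuous_induced_dom

theorem exists_mem_twoSidedIdeal_apply_eq {J : TwoSidedIdeal (Module.End k V)} (hJ : J ≠ ⊥)
    {u : V} (hu : u ≠ 0) (w : V) : ∃ R ∈ J, R u = w := by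
  obtain ⟨φ, hφJ, hφ⟩ : ∃ φ ∈ J, φ ≠ 0 := by
    by_contra! h
    exact hJ (eq_bot_iff.mpr h)
  obtain ⟨v, hv⟩ : ∃ v, φ v ≠ 0 := by
    by_contra! h
    exact hφ (LinearMap.ext h)
  obtain ⟨f, hf⟩ := Module.Projective.exists_dual_eq_one k hv
  obtain ⟨g, hg⟩ := Module.Projective.exists_dual_eq_one k hu
  refine ⟨(LinearMap.toSpanSingleton k V w ∘ₗ f) * φ * (LinearMap.toSpanSingleton k V v ∘ₗ g),
    J.mul_mem_right _ _ (J.mul_mem_left _ _ hφJ), ?_⟩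
  simp [hf, hg]

theorem exists_mem_twoSidedIdeal_apply_eq_self_of_finite {J : TwoSidedIdeal (Module.End k V)} (hJ : J ≠ ⊥)
    {I : Set V} (hI : I.Finite) : ∃ P ∈ J, ∀ x ∈ I, P x = x := by
  induction I, hI using Set.Finite.induction_on with
  | empty => exact ⟨0, J.zero_mem, by simp⟩
  | @insert v I _ _ ih =>
    obtain ⟨P, hPJ, hP⟩ := ih
    by_cases hv : v - P v = 0
    · exact ⟨P, hPJ, Set.forall_mem_insert.mpr ⟨(sub_eq_zero.mp hv).symm, hP⟩⟩
    obtain ⟨R, hRJ, hR⟩ := exists_mem_twoSidedIdeal_apply_eq hJ hv (v - P v)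
    -- `P + R - R P` still fixes `I`, and on `v` it adds the missing `v - P v` to `P v`
    refine ⟨P + R - R * P, J.sub_mem (J.add_mem hPJ hRJ) (J.mul_mem_left _ _ hPJ),
      Set.forall_mem_insert.mpr ⟨?_, fun x hx => by simp [hP x hx]⟩⟩
    simp only [LinearMap.sub_apply, LinearMap.add_apply, Module.End.mul_apply]
    rw [map_sub] at hR
    rw [add_sub_assoc, hR, add_sub_cancel]

theorem dense_twoSidedIdeal_of_ne_bot {J : TwoSidedIdeal (Module.End k V)} (hJ : J ≠ ⊥) :
    Dense (J : Set (Module.End k V)) := fun ψ => by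
  refine (mem_closure_iff_nhds_basis (nhds_basis_eqOn ψ)).mpr fun I hI => ?_
  obtain ⟨P, hPJ, hP⟩ := exists_mem_twoSidedIdeal_apply_eq_self_of_finite hJ hI
  exact ⟨ψ * P, J.mul_mem_left _ _ hPJ, fun x hx => by simp [hP x hx]⟩

end Module.End

/-- Every continuous (not necessarily unital) ring homomorphism
`ρ : L(V) → L(W)` between endomorphism rings equipped with their finite topologies
is either injective or identically zero. -/
theorem continuous_ringHom_endomorphism_injective_or_zero
    (k V W : Type*) [Field k] [AddCommGroup V] [Module k V] [AddCommGroup W] [Module k W]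
    (ρ : Module.End k V →ₙ+* Module.End k W)
    (hcont : @Continuous (Module.End k V) (Module.End k W)
      (finiteTopology k V) (finiteTopology k W) ρ) :
    Function.Injective ρ ∨ ρ = 0 := by
  rw [or_iff_not_imp_left, ← TwoSidedIdeal.ker_eq_bot]
  intro hker
  have hclosed : IsClosed (TwoSidedIdeal.ker ρ : Set (Module.End k V)) :=
    isClosed_singleton.preimage hcont
  have hker_univ := (Module.End.dense_twoSidedIdeal_of_ne_bot hker).closure_eq
  rw [hclosed.closure_eq] at hker_univ
  ext1 ψ
  exact (TwoSidedIdeal.mem_ker ρ).mp (Set.eq_univ_iff_forall.mp hker_univ ψ)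
end

section
/- Suppose τ and ζ are nonzero complex numbers, neither of which is a root of unity, and that either (a) ζ^m ≠ τ^n for every nonzero integer m and every integer n, or (b) ζ^m = τ^k for some integers m > 0 and k < 0. Then there exists a group homomorphism v from the multiplicative group ℂˣ of nonzero complex numbers to the additive group ℚ of rational numbers such that v(ζ) > 0 and v(τ) < 0. -/
lemma aux_zpow_eq_one_imp_zero {z : ℂ} (hz : ∀ n : ℕ, 0 < n → z ^ n ≠ 1)
    {N : ℤ} (hN : z ^ N = 1) : N = 0 := by
  rcases lt_trichotomy N 0 with hlt | h0 | hgt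
  · exfalso
    apply hz (-N).toNat (by omega)
    have h2 : z ^ (((-N).toNat : ℤ)) = 1 := by
      rw [Int.toNat_of_nonneg (by omega), zpow_neg, hN, inv_one]
    rw [← zpow_natCast]; exact h2
  · exact h0
  · exfalso
    apply hz N.toNat (by omega)
    have h2 : z ^ ((N.toNat : ℤ)) = 1 := by
      rw [Int.toNat_of_nonneg (by omega)]; exact hN
    rw [← zpow_natCast]; exact h2

/-- If `τ, ζ` are nonzero complex numbers, neither a root of unity, and either
(a) `ζ^m ≠ τ^n` for every nonzero integer `m` and every integer `n`, or
(b) `ζ^m = τ^k` for some integers `m > 0`, `k < 0`,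
then there is a group homomorphism `v : ℂˣ → ℚ` (from the multiplicative group of
nonzero complex numbers to the additive group of rationals) with `v ζ > 0` and `v τ < 0`. -/
theorem exists_groupHom_units_to_rat_pos_neg
    (τ ζ : ℂ) (hτ0 : τ ≠ 0) (hζ0 : ζ ≠ 0)
    (hτ : ∀ n : ℕ, 0 < n → τ ^ n ≠ 1) (hζ : ∀ n : ℕ, 0 < n → ζ ^ n ≠ 1)
    (h : (∀ m : ℤ, m ≠ 0 → ∀ n : ℤ, ζ ^ m ≠ τ ^ n) ∨
        (∃ m k : ℤ, 0 < m ∧ k < 0 ∧ ζ ^ m = τ ^ k)) :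
    ∃ v : ℂˣ → ℚ, (∀ x y : ℂˣ, v (x * y) = v x + v y) ∧
      0 < v (Units.mk0 ζ hζ0) ∧ v (Units.mk0 τ hτ0) < 0 := by
  classical
  -- Step 1: find rational values x > 0, y < 0 compatible with all relations.
  have key : ∃ x y : ℚ, 0 < x ∧ y < 0 ∧
      ∀ p q : ℤ, ζ ^ p * τ ^ q = 1 → (p : ℚ) * x + (q : ℚ) * y = 0 := by
    rcases h with ha | ⟨m, k, hm, hk, hmk⟩
    · refine ⟨1, -1, one_pos, by norm_num, ?_⟩
      intro p q hpq
      have hζp : ζ ^ p = τ ^ (-q) := by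
        rw [zpow_neg]; exact eq_inv_of_mul_eq_one_left hpq
      have hp0 : p = 0 := by
        by_contra hp
        exact ha p hp (-q) hζp
      subst hp0
      have hq0 : q = 0 := by
        apply aux_zpow_eq_one_imp_zero hτ
        simpa using hpq
      subst hq0
      simp
    · refine ⟨-(k : ℚ), -(m : ℚ), by exact_mod_cast neg_pos.mpr (by exact_mod_cast hk),
        by exact_mod_cast neg_neg_iff_pos.mpr (by exact_mod_cast hm), ?_⟩
      intro p q hpq
      have h1 : ζ ^ (p * m) * τ ^ (q * m) = 1 := by
        have := congrArg (· ^ m) hpq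
        simpa [mul_zpow, ← zpow_mul] using this
      have h2 : ζ ^ (p * m) = τ ^ (k * p) := by
        rw [mul_comm p m, zpow_mul, hmk, ← zpow_mul]
      have h3 : τ ^ (k * p + q * m) = 1 := by
        rw [zpow_add₀ hτ0, ← h2]
        exact h1
      have h4 : k * p + q * m = 0 := aux_zpow_eq_one_imp_zero hτ h3
      have h5 : ((k : ℚ) * p + (q : ℚ) * m) = 0 := by exact_mod_cast congrArg (Int.cast : ℤ → ℚ) h4
      push_cast
      linarith
  obtain ⟨x, y, hx, hy, hkey⟩ := key
  -- Step 2: set up the additive picture.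
  set a : Additive ℂˣ := Additive.ofMul (Units.mk0 ζ hζ0) with ha_def
  set b : Additive ℂˣ := Additive.ofMul (Units.mk0 τ hτ0) with hb_def
  let φ : (ℤ × ℤ) →ₗ[ℤ] Additive ℂˣ :=
    (LinearMap.toSpanSingleton ℤ _ a).comp (LinearMap.fst ℤ ℤ ℤ) +
      (LinearMap.toSpanSingleton ℤ _ b).comp (LinearMap.snd ℤ ℤ ℤ)
  let ψ : (ℤ × ℤ) →ₗ[ℤ] ℚ :=
    (LinearMap.toSpanSingleton ℤ _ x).comp (LinearMap.fst ℤ ℤ ℤ) +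
      (LinearMap.toSpanSingleton ℤ _ y).comp (LinearMap.snd ℤ ℤ ℤ)
  have hφ_apply : ∀ pq : ℤ × ℤ, φ pq = pq.1 • a + pq.2 • b := by
    intro pq
    simp [φ, LinearMap.toSpanSingleton_apply]
  have hψ_apply : ∀ pq : ℤ × ℤ, ψ pq = (pq.1 : ℚ) * x + (pq.2 : ℚ) * y := by
    intro pq
    simp [ψ, LinearMap.toSpanSingleton_apply, zsmul_eq_mul]
  have hle : LinearMap.ker φ ≤ LinearMap.ker ψ := by
    intro pq hpq
    have h0 : pq.1 • a + pq.2 • b = 0 := by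
      rw [← hφ_apply]; exact hpq
    have h1 : (Units.mk0 ζ hζ0) ^ pq.1 * (Units.mk0 τ hτ0) ^ pq.2 = 1 := by
      have := congrArg Additive.toMul h0
      simpa [ha_def, hb_def, toMul_add, toMul_zsmul] using this
    have h2 : ζ ^ pq.1 * τ ^ pq.2 = 1 := by
      have := congrArg (Units.val) h1
      simpa [Units.val_mul, Units.val_zpow_eq_zpow_val] using this
    have := hkey pq.1 pq.2 h2
    simp only [LinearMap.mem_ker, hψ_apply]
    exact this
  -- Step 3: factor ψ through the range of φ and extend to all of `Additive ℂˣ`.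
  let e := LinearMap.quotKerEquivRange φ
  let g : ((ℤ × ℤ) ⧸ LinearMap.ker φ) →ₗ[ℤ] ℚ := Submodule.liftQ _ ψ hle
  let g' : (LinearMap.range φ) →ₗ[ℤ] ℚ := g.comp e.symm.toLinearMap
  have hinj : Module.Injective ℤ ℚ := (Module.Baer.of_divisible ℚ).injective
  obtain ⟨hmap, hext⟩ := hinj.out (LinearMap.range φ).subtype
    (Submodule.injective_subtype _) g'
  have hval : ∀ pq : ℤ × ℤ, hmap (φ pq) = ψ pq := by
    intro pq
    have hmem : φ pq ∈ LinearMap.range φ := ⟨pq, rfl⟩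
    have h1 : hmap (φ pq) = g' ⟨φ pq, hmem⟩ := by
      have := hext ⟨φ pq, hmem⟩
      simpa using this
    rw [h1]
    show g (e.symm ⟨φ pq, hmem⟩) = ψ pq
    rw [LinearMap.quotKerEquivRange_symm_apply_image]
    simp [g, Submodule.mkQ_apply, Submodule.liftQ_apply]
  refine ⟨fun t => hmap (Additive.ofMul t), ?_, ?_, ?_⟩
  · intro s t
    show hmap (Additive.ofMul (s * t)) = hmap (Additive.ofMul s) + hmap (Additive.ofMul t)
    rw [ofMul_mul, map_add]
  · show 0 < hmap a
    have h1 : φ (1, 0) = a := by rw [hφ_apply]; simp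
    have h2 := hval (1, 0)
    rw [h1, hψ_apply] at h2
    rw [h2]
    simpa using hx
  · show hmap b < 0
    have h1 : φ (0, 1) = b := by rw [hφ_apply]; simp
    have h2 := hval (0, 1)
    rw [h1, hψ_apply] at h2
    rw [h2]
    simpa using hy
end

section
/- Let R be a topological ring, S ⊆ R a subring that is dense as a subset of R, and M a left R-module that is smooth, i.e. for every m ∈ M the set {x ∈ R : x·m = 0} is open in R. If M is a simple R-module, then M, regarded as an S-module by restriction of scalars, is a simple S-module. -/
/-!
Smoothness makes each orbit map `r ↦ r • m` locally constant, so by density every `r • m` is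
already `s • m` for some `s ∈ S`. Hence every `S`-submodule of `M` is an `R`-submodule, and the
two submodule lattices coincide.
-/

theorem Dense.exists_mem_smul_eq {R M : Type*} [Ring R] [TopologicalSpace R] [ContinuousAdd R]
    [AddCommGroup M] [Module R M] {D : Set R} (hD : Dense D)
    (hsmooth : ∀ m : M, IsOpen {x : R | x • m = 0}) (r : R) (m : M) : ∃ s ∈ D, s • m = r • m := by
  have hopen : IsOpen {x : R | x • m = r • m} := by
    simpa [add_smul, add_neg_eq_zero] using (hsmooth m).preimage (continuous_add_const (-r))
  exact hD.exists_mem_open hopen ⟨r, rfl⟩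

namespace Submodule

variable {S R M : Type*} [Semiring S] [Semiring R] [AddCommMonoid M] [Module S M] [Module R M]
  [SMul S R] [IsScalarTower S R M]

theorem restrictScalars_surjective_of_forall_exists_smul_eq
    (h : ∀ (r : R) (m : M), ∃ s : S, s • m = r • m) :
    Function.Surjective (restrictScalars S : Submodule R M → Submodule S M) := fun N ↦
  ⟨{ N with
      smul_mem' := fun r m hm ↦ by
        obtain ⟨s, hs⟩ := h r m
        exact hs ▸ N.smul_mem s hm }, rfl⟩

end Submodule

theorem IsSimpleModule.of_forall_exists_smul_eq (R : Type*) {S M : Type*} [Ring S] [Ring R]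
    [AddCommGroup M] [Module S M] [Module R M] [SMul S R] [IsScalarTower S R M]
    [IsSimpleModule R M] (h : ∀ (r : R) (m : M), ∃ s : S, s • m = r • m) :
    IsSimpleModule S M :=
  (isSimpleModule_iff S M).2 <|
    (OrderIso.ofSurjective (Submodule.restrictScalarsEmbedding S R M)
      (Submodule.restrictScalars_surjective_of_forall_exists_smul_eq h)).symm.isSimpleOrder

/-- If `S` is a dense subring of a topological ring `R` and `M` is a smooth left
`R`-module (every annihilator `{x : R | x • m = 0}` is open) which is simple as an
`R`-module, then `M` is simple as an `S`-module (by restriction of scalars). -/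
theorem isSimpleModule_restrict_of_dense_subring_of_smooth
    (R : Type*) [Ring R] [TopologicalSpace R] [IsTopologicalRing R]
    (S : Subring R) (hS : Dense (S : Set R))
    (M : Type*) [AddCommGroup M] [Module R M]
    (hsmooth : ∀ m : M, IsOpen {x : R | x • m = 0})
    (hsimple : IsSimpleModule R M) :
    IsSimpleModule S M :=
  .of_forall_exists_smul_eq R fun r m ↦
    let ⟨s, hs, hsm⟩ := hS.exists_mem_smul_eq hsmooth r m
    ⟨⟨s, hs⟩, hsm⟩
end

section
/- Let R be a topological ring, S ⊆ R a subring that is dense as a subset of R, and let M and N be left R-modules that are smooth, i.e. for every element m the set {x ∈ R : x·m = 0} is open in R. If f : M → N is an additive bijection satisfying f(s·m) = s·f(m) for all s ∈ S and m ∈ M, then f(r·m) = r·f(m) for all r ∈ R and m ∈ M; in particular M and N are isomorphic as R-modules. -/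
/-! Smoothness makes `x ↦ x • m` locally constant on `R`, so for given `r` and `m` a point `s`
of the dense subring close enough to `r` acts on `m` and on `f m` exactly as `r` does. -/

section SmoothModule

variable {R : Type*} [Ring R] [TopologicalSpace R] [ContinuousSub R]
  {M N : Type*} [AddCommGroup M] [Module R M] [AddCommGroup N] [Module R N]

theorem isOpen_setOf_smul_eq_smul {m : M} (hm : IsOpen {x : R | x • m = 0}) (r : R) :
    IsOpen {x : R | x • m = r • m} := by
  have hpre : IsOpen ((fun x => x - r) ⁻¹' {x : R | x • m = 0}) :=
    hm.preimage (continuous_id.sub continuous_const)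
  simpa only [Set.preimage_ofPred_eq, sub_smul, sub_eq_zero] using hpre

theorem Dense.exists_mem_smul_eq_smul_and_smul_eq_smul {S : Set R} (hS : Dense S)
    {m : M} {n : N} (hm : IsOpen {x : R | x • m = 0}) (hn : IsOpen {x : R | x • n = 0})
    (r : R) : ∃ s ∈ S, s • m = r • m ∧ s • n = r • n :=
  hS.exists_mem_open ((isOpen_setOf_smul_eq_smul hm r).inter (isOpen_setOf_smul_eq_smul hn r))
    ⟨r, rfl, rfl⟩

theorem AddMonoidHom.map_smul_of_dense_subring {S : Subring R} (hS : Dense (S : Set R))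
    (f : M →+ N) (hf : ∀ (s : S) (m : M), f ((s : R) • m) = (s : R) • f m) {m : M}
    (hm : IsOpen {x : R | x • m = 0}) (hfm : IsOpen {x : R | x • f m = 0}) (r : R) :
    f (r • m) = r • f m := by
  obtain ⟨s, hsS, hsm, hsfm⟩ := hS.exists_mem_smul_eq_smul_and_smul_eq_smul hm hfm r
  calc f (r • m) = f (s • m) := by rw [hsm]
    _ = s • f m := hf ⟨s, hsS⟩ m
    _ = r • f m := hsfm

end SmoothModule

/-- If `S` is a dense subring of a topological ring `R`, `M` and `N` are smooth left
`R`-modules, and `f : M → N` is an additive bijection commuting with the action of `S`,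
then `f` commutes with the action of all of `R`; in particular `M ≅ N` as `R`-modules. -/
theorem addHom_bijective_S_equivariant_is_R_equivariant
    (R : Type*) [Ring R] [TopologicalSpace R] [IsTopologicalRing R]
    (S : Subring R) (hS : Dense (S : Set R))
    (M N : Type*) [AddCommGroup M] [Module R M] [AddCommGroup N] [Module R N]
    (hsmoothM : ∀ m : M, IsOpen {x : R | x • m = 0})
    (hsmoothN : ∀ n : N, IsOpen {x : R | x • n = 0})
    (f : M →+ N) (hf : Function.Bijective f)
    (hS_equiv : ∀ (s : S) (m : M), f ((s : R) • m) = (s : R) • f m) :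
    (∀ (r : R) (m : M), f (r • m) = r • f m) ∧ Nonempty (M ≃ₗ[R] N) := by
  have map_smul : ∀ (r : R) (m : M), f (r • m) = r • f m := fun r m =>
    f.map_smul_of_dense_subring hS hS_equiv (hsmoothM m) (hsmoothN (f m)) r
  exact ⟨map_smul, ⟨LinearEquiv.ofBijective { f with map_smul' := map_smul } hf⟩⟩
end

section
/- Let V be a finite-dimensional complex vector space, A : V → V a ℂ-linear map, τ a nonzero complex number that is not a root of unity, and c a nonzero complex number. Let T be a ℂ-linear endomorphism of the space V((ε)) of V-valued formal Laurent series such that for every w ∈ V((ε)) and every ℓ ∈ ℤ the coefficient of ε^ℓ in T(w) equals τ^ℓ · A(coefficient of ε^ℓ in w). Then the eigenspace {w ∈ V((ε)) : T(w) = c·w} is finite-dimensional over ℂ. -/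
/-- Let `V` be a finite-dimensional complex vector space, `A : V → V` linear, `τ` a nonzero
complex number which is not a root of unity, and `c ≠ 0`. If `T` is a linear endomorphism of
the space `V((ε))` of `V`-valued formal Laurent (Hahn) series acting coefficientwise by
`(T w)_ℓ = τ^ℓ • A w_ℓ`, then the eigenspace `{w | T w = c • w}` is finite-dimensional. -/
theorem finiteDimensional_eigenspace_of_twisted_endomorphism
    (V : Type*) [AddCommGroup V] [Module ℂ V] [FiniteDimensional ℂ V]
    (A : V →ₗ[ℂ] V) (τ : ℂ) (hτ0 : τ ≠ 0) (hτ : ∀ n : ℕ, 0 < n → τ ^ n ≠ 1)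
    (c : ℂ) (hc : c ≠ 0)
    (T : HahnSeries ℤ V →ₗ[ℂ] HahnSeries ℤ V)
    (hT : ∀ (w : HahnSeries ℤ V) (ℓ : ℤ), (T w).coeff ℓ = τ ^ ℓ • A (w.coeff ℓ)) :
    FiniteDimensional ℂ (Module.End.eigenspace (T : Module.End ℂ (HahnSeries ℤ V)) c) := by
  classical
  -- the candidate eigenvalue of A at level ℓ
  set μ : ℤ → ℂ := fun ℓ => τ ^ (-ℓ) * c with hμ
  have hμinj : Function.Injective μ := by
    intro a b hab
    have h1 : τ ^ (-a) = τ ^ (-b) := by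
      have := mul_right_cancel₀ hc hab
      exact this
    by_contra hne
    have hne' : a ≠ b := hne
    -- τ ^ (b - a) = 1
    have h2 : τ ^ (b - a) = 1 := by
      calc τ ^ (b - a) = τ ^ b * τ ^ (-a) := by rw [sub_eq_add_neg, zpow_add₀ hτ0]
        _ = τ ^ b * τ ^ (-b) := by rw [h1]
        _ = 1 := by rw [← zpow_add₀ hτ0]; simp
    have hn : (b - a).natAbs ≠ 0 := by
      simp only [ne_eq, Int.natAbs_eq_zero, sub_eq_zero]
      exact fun h => hne' h.symm
    have : τ ^ ((b - a).natAbs) = 1 := by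
      rcases Int.natAbs_eq (b - a) with h | h
      · rw [← zpow_natCast, ← h, h2]
      · rw [← zpow_natCast, show (((b - a).natAbs : ℤ)) = -(b - a) by omega,
          zpow_neg, h2, inv_one]
    exact hτ _ (Nat.pos_of_ne_zero hn) this
  -- the set of levels where A can have eigenvalue μ ℓ
  set S : Set ℤ := μ ⁻¹' (Module.End.HasEigenvalue A) with hS
  have hSfin : S.Finite :=
    Set.Finite.preimage hμinj.injOn (Module.End.finite_hasEigenvalue A)
  have : Finite S := hSfin
  -- key fact: coefficients of eigenvectors are eigenvectors of A
  have key : ∀ w ∈ Module.End.eigenspace (T : Module.End ℂ (HahnSeries ℤ V)) c,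
      ∀ ℓ : ℤ, A (w.coeff ℓ) = μ ℓ • w.coeff ℓ := by
    intro w hw ℓ
    have hw' : T w = c • w := Module.End.mem_eigenspace_iff.mp hw
    have h1 : τ ^ ℓ • A (w.coeff ℓ) = c • w.coeff ℓ := by
      rw [← hT w ℓ, hw']; rfl
    have hτℓ : τ ^ ℓ ≠ 0 := zpow_ne_zero _ hτ0
    have := congrArg (fun v => (τ ^ ℓ)⁻¹ • v) h1
    simp only [smul_smul, inv_mul_cancel₀ hτℓ, one_smul] at this
    rw [this]
    simp [hμ, zpow_neg]
  -- linear map to a finite product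
  let L : Module.End.eigenspace (T : Module.End ℂ (HahnSeries ℤ V)) c →ₗ[ℂ] (S → V) :=
    { toFun := fun w => fun ℓ => (w : HahnSeries ℤ V).coeff ℓ
      map_add' := fun x y => by ext ℓ; simp
      map_smul' := fun r x => by ext ℓ; simp }
  have hLinj : Function.Injective L := by
    intro x y hxy
    ext ℓ
    show (x : HahnSeries ℤ V).coeff ℓ = (y : HahnSeries ℤ V).coeff ℓ
    by_cases hℓ : ℓ ∈ S
    · exact congrFun hxy ⟨ℓ, hℓ⟩
    · have hx := key x x.2 ℓ
      have hy := key y y.2 ℓ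
      have hnx : (x : HahnSeries ℤ V).coeff ℓ = 0 := by
        by_contra h
        exact hℓ (Module.End.hasEigenvalue_of_hasEigenvector ⟨Module.End.mem_eigenspace_iff.mpr hx, h⟩)
      have hny : (y : HahnSeries ℤ V).coeff ℓ = 0 := by
        by_contra h
        exact hℓ (Module.End.hasEigenvalue_of_hasEigenvector ⟨Module.End.mem_eigenspace_iff.mpr hy, h⟩)
      rw [hnx, hny]
  exact FiniteDimensional.of_injective L hLinj
end
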